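/- arXiv:2205.08596 — 2 statements merged into one kernel-verified Lean document; each statement's English description precedes it below -/
import Mathlib

section
/- Let H be a Hopf algebra over a field k and M a partial H-comodule for which there exists a finite subset F ⊆ M such that the only partial subcomodule of M containing F is M itself. Then M is a finitely generated object of the Grothendieck category PMod^H: for every filtered colimit N = colim Nᵢ of monomorphisms in PMod^H, the canonical map colim Hom(M, Nᵢ) → Hom(M, N) is bijective. -/
/-!
The forgetful functor to vector spaces creates colimits: the colimit of the underlying spaces
carries the coaction induced by those of the stages, and the partial comodule axioms pass to it
because both sides of each axiom are natural in coaction-compatible linear maps. Hence the stages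
of a filtered colimit cover it, and when the transition maps are monomorphisms (which are
injective, since kernels are subcomodules) so are the colimit maps.

Given `f : M ⟶ colim Nᵢ`, the finitely many elements of `f(F)` lie in the image of one stage
`Nⱼ`. The preimage of that image is a subcomodule containing `F`, hence all of `M`, so `f` factors
linearly through the injective map `Nⱼ → colim Nᵢ`, and the factorisation is colinear because
`- ⊗ H` preserves injectivity over a field. Two morphisms identified in the colimit are already
identified at any common upper stage, the colimit maps being monomorphisms.
-/

open TensorProduct CategoryTheory CategoryTheory.Limits

noncomputable section

universe u

section PartialComodules

variable (k : Type u) [Field k] (H : Type u) [Ring H] [HopfAlgebra k H]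

/-- Multiply the last two tensor factors using the multiplication of `H`. -/
def mulLast (X : Type u) [AddCommGroup X] [Module k X] :
    ((X ⊗[k] H) ⊗[k] H) →ₗ[k] X ⊗[k] H :=
  (LinearMap.lTensor X (LinearMap.mul' k H)) ∘ₗ (TensorProduct.assoc k X H H).toLinearMap

/-- Comultiply the last tensor factor using the comultiplication of `H`. -/
def comulLast (X : Type u) [AddCommGroup X] [Module k X] :
    (X ⊗[k] H) →ₗ[k] (X ⊗[k] H) ⊗[k] H :=
  (TensorProduct.assoc k X H H).symm.toLinearMap ∘ₗ LinearMap.lTensor X Coalgebra.comul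

/-- Apply the antipode to the last tensor factor. -/
def antLast (X : Type u) [AddCommGroup X] [Module k X] :
    (X ⊗[k] H) →ₗ[k] X ⊗[k] H :=
  LinearMap.lTensor X (HopfAlgebra.antipode (R := k) (A := H))

/-- Apply the counit to the last tensor factor. -/
def counitLast (X : Type u) [AddCommGroup X] [Module k X] :
    (X ⊗[k] H) →ₗ[k] X :=
  (TensorProduct.rid k X).toLinearMap ∘ₗ LinearMap.lTensor X Coalgebra.counit

/-- `(M, ρ)` is a (right, algebraic) partial `H`-comodule: (PCM1) `ρ` is counital, while
(PCM2) and (PCM3) express the partial coassociativity. -/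
structure IsPartialComodule {M : Type u} [AddCommGroup M] [Module k M]
    (ρ : M →ₗ[k] M ⊗[k] H) : Prop where
  counit : counitLast k H M ∘ₗ ρ = LinearMap.id
  pcm2 :
    mulLast k H (M ⊗[k] H) ∘ₗ antLast k H ((M ⊗[k] H) ⊗[k] H) ∘ₗ
        LinearMap.rTensor H (comulLast k H M) ∘ₗ LinearMap.rTensor H ρ ∘ₗ ρ =
    mulLast k H (M ⊗[k] H) ∘ₗ antLast k H ((M ⊗[k] H) ⊗[k] H) ∘ₗ
        LinearMap.rTensor H (LinearMap.rTensor H ρ) ∘ₗ LinearMap.rTensor H ρ ∘ₗ ρ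
  pcm3 :
    LinearMap.rTensor H (mulLast k H M) ∘ₗ LinearMap.rTensor H (antLast k H (M ⊗[k] H)) ∘ₗ
        comulLast k H (M ⊗[k] H) ∘ₗ LinearMap.rTensor H ρ ∘ₗ ρ =
    LinearMap.rTensor H (mulLast k H M) ∘ₗ LinearMap.rTensor H (antLast k H (M ⊗[k] H)) ∘ₗ
        LinearMap.rTensor H (LinearMap.rTensor H ρ) ∘ₗ LinearMap.rTensor H ρ ∘ₗ ρ

/-- A subspace `N` is a partial subcomodule when it is invariant under the coaction. -/
def IsSubcomodule {M : Type u} [AddCommGroup M] [Module k M]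
    (ρ : M →ₗ[k] M ⊗[k] H) (N : Submodule k M) : Prop :=
  ∀ n ∈ N, ρ n ∈ LinearMap.range (LinearMap.rTensor H N.subtype)

end PartialComodules

section PartialComoduleCategory

variable (k : Type u) [Field k] (H : Type u) [Ring H] [HopfAlgebra k H]

/-- Objects of the category `PMod^H` of right partial `H`-comodules. -/
structure PComod where
  carrier : Type u
  [isAddCommGroup : AddCommGroup carrier]
  [isModule : Module k carrier]
  ρ : carrier →ₗ[k] carrier ⊗[k] H
  isPartialComodule : IsPartialComodule k H ρ

attribute [instance] PComod.isAddCommGroup PComod.isModule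

/-- Morphisms of partial comodules are linear maps commuting with the coactions. -/
instance : Category.{u} (PComod k H) where
  Hom A B := { f : A.carrier →ₗ[k] B.carrier // LinearMap.rTensor H f ∘ₗ A.ρ = B.ρ ∘ₗ f }
  id A := ⟨LinearMap.id, by simp [LinearMap.rTensor_id]⟩
  comp {A B C} f g := ⟨g.1 ∘ₗ f.1, by
    rw [LinearMap.rTensor_comp, LinearMap.comp_assoc, f.2, ← LinearMap.comp_assoc, g.2,
      LinearMap.comp_assoc]⟩
  id_comp f := by apply Subtype.ext; simp
  comp_id f := by apply Subtype.ext; simp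
  assoc f g h := by apply Subtype.ext; simp [LinearMap.comp_assoc]

/-- The forgetful functor from partial `H`-comodules to vector spaces. -/
def pforget : PComod k H ⥤ ModuleCat.{u} k where
  obj A := ModuleCat.of k A.carrier
  map f := ModuleCat.ofHom f.1
  map_id _ := rfl
  map_comp _ _ := rfl

end PartialComoduleCategory


open LinearMap

section LinearAlgebra

variable {R : Type*} {A₁ A₂ A₃ B₁ B₂ B₃ : Type*}
  [AddCommMonoid A₁] [AddCommMonoid A₂] [AddCommMonoid A₃]
  [AddCommMonoid B₁] [AddCommMonoid B₂] [AddCommMonoid B₃]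

theorem LinearMap.comp_comp_eq_of_comp_eq [Semiring R] [Module R A₁] [Module R A₂] [Module R A₃]
    [Module R B₁] [Module R B₂] [Module R B₃] {φ₁ : A₁ →ₗ[R] B₁} {φ₂ : A₂ →ₗ[R] B₂}
    {φ₃ : A₃ →ₗ[R] B₃} {g : A₁ →ₗ[R] A₂} {h : A₂ →ₗ[R] A₃} {g' : B₁ →ₗ[R] B₂}
    {h' : B₂ →ₗ[R] B₃} (sq₁ : g' ∘ₗ φ₁ = φ₂ ∘ₗ g) (sq₂ : h' ∘ₗ φ₂ = φ₃ ∘ₗ h) :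
    (h' ∘ₗ g') ∘ₗ φ₁ = φ₃ ∘ₗ h ∘ₗ g := by
  rw [comp_assoc, sq₁, ← comp_assoc, sq₂, comp_assoc]

theorem LinearMap.rTensor_comp_eq_of_comp_eq [CommSemiring R] [Module R A₁] [Module R A₂]
    [Module R B₁] [Module R B₂] {φ₁ : A₁ →ₗ[R] B₁} {φ₂ : A₂ →ₗ[R] B₂} {g : A₁ →ₗ[R] A₂}
    {g' : B₁ →ₗ[R] B₂} (M : Type*) [AddCommMonoid M] [Module R M] (sq : g' ∘ₗ φ₁ = φ₂ ∘ₗ g) :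
    rTensor M g' ∘ₗ rTensor M φ₁ = rTensor M φ₂ ∘ₗ rTensor M g := by
  rw [← rTensor_comp, sq, rTensor_comp]

theorem LinearMap.exists_comp_eq_of_range_le [Semiring R] [Module R A₁] [Module R A₂]
    [Module R A₃] {i : A₁ →ₗ[R] A₂} (hi : Function.Injective i) {f : A₃ →ₗ[R] A₂}
    (h : range f ≤ range i) : ∃ g : A₃ →ₗ[R] A₁, i ∘ₗ g = f :=
  ⟨(LinearEquiv.ofInjective i hi).symm.toLinearMap ∘ₗ f.codRestrict _ fun x => h ⟨x, rfl⟩,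
    by ext x; simp⟩

end LinearAlgebra

section PartialComodules

variable {k : Type u} [Field k] {H : Type u} [Ring H] [HopfAlgebra k H]

section Naturality

variable {X Y : Type u} [AddCommGroup X] [Module k X] [AddCommGroup Y] [Module k Y]

theorem counitLast_comp_rTensor (f : Y →ₗ[k] X) :
    counitLast k H X ∘ₗ rTensor H f = f ∘ₗ counitLast k H Y := by
  ext; simp [counitLast]

theorem antLast_comp_rTensor (f : Y →ₗ[k] X) :
    antLast k H X ∘ₗ rTensor H f = rTensor H f ∘ₗ antLast k H Y := by
  simp only [antLast, lTensor_comp_rTensor, rTensor_comp_lTensor]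

theorem mulLast_comp_rTensor (f : Y →ₗ[k] X) :
    mulLast k H X ∘ₗ rTensor H (rTensor H f) = rTensor H f ∘ₗ mulLast k H Y := by
  ext; simp [mulLast]

theorem comulLast_comp_rTensor (f : Y →ₗ[k] X) :
    comulLast k H X ∘ₗ rTensor H f = rTensor H (rTensor H f) ∘ₗ comulLast k H Y := by
  have hassoc : rTensor H (rTensor H f) ∘ₗ (TensorProduct.assoc k Y H H).symm.toLinearMap =
      (TensorProduct.assoc k X H H).symm.toLinearMap ∘ₗ rTensor (H ⊗[k] H) f := by
    ext; rfl
  rw [comulLast, comulLast, comp_assoc, lTensor_comp_rTensor, ← rTensor_comp_lTensor,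
    ← comp_assoc, ← hassoc, comp_assoc]

end Naturality

variable {M N : Type u} [AddCommGroup M] [Module k M] [AddCommGroup N] [Module k N]

def pcm2Lhs (ρ : M →ₗ[k] M ⊗[k] H) : M →ₗ[k] (M ⊗[k] H) ⊗[k] H :=
  mulLast k H (M ⊗[k] H) ∘ₗ antLast k H ((M ⊗[k] H) ⊗[k] H) ∘ₗ
    rTensor H (comulLast k H M) ∘ₗ rTensor H ρ ∘ₗ ρ

def pcm2Rhs (ρ : M →ₗ[k] M ⊗[k] H) : M →ₗ[k] (M ⊗[k] H) ⊗[k] H :=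
  mulLast k H (M ⊗[k] H) ∘ₗ antLast k H ((M ⊗[k] H) ⊗[k] H) ∘ₗ
    rTensor H (rTensor H ρ) ∘ₗ rTensor H ρ ∘ₗ ρ

def pcm3Lhs (ρ : M →ₗ[k] M ⊗[k] H) : M →ₗ[k] (M ⊗[k] H) ⊗[k] H :=
  rTensor H (mulLast k H M) ∘ₗ rTensor H (antLast k H (M ⊗[k] H)) ∘ₗ
    comulLast k H (M ⊗[k] H) ∘ₗ rTensor H ρ ∘ₗ ρ

def pcm3Rhs (ρ : M →ₗ[k] M ⊗[k] H) : M →ₗ[k] (M ⊗[k] H) ⊗[k] H :=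
  rTensor H (mulLast k H M) ∘ₗ rTensor H (antLast k H (M ⊗[k] H)) ∘ₗ
    rTensor H (rTensor H ρ) ∘ₗ rTensor H ρ ∘ₗ ρ

variable {ρM : M →ₗ[k] M ⊗[k] H} {ρN : N →ₗ[k] N ⊗[k] H} {f : M →ₗ[k] N}

section Transfer

variable (hf : rTensor H f ∘ₗ ρM = ρN ∘ₗ f)
include hf

theorem counitLast_comp_coaction_comp :
    (counitLast k H N ∘ₗ ρN) ∘ₗ f = f ∘ₗ counitLast k H M ∘ₗ ρM :=
  comp_comp_eq_of_comp_eq hf.symm (counitLast_comp_rTensor f)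

theorem pcm2Lhs_comp : pcm2Lhs ρN ∘ₗ f = rTensor H (rTensor H f) ∘ₗ pcm2Lhs ρM :=
  comp_comp_eq_of_comp_eq (comp_comp_eq_of_comp_eq (comp_comp_eq_of_comp_eq
    (comp_comp_eq_of_comp_eq hf.symm (rTensor_comp_eq_of_comp_eq H hf.symm))
    (rTensor_comp_eq_of_comp_eq H (comulLast_comp_rTensor f)))
    (antLast_comp_rTensor _)) (mulLast_comp_rTensor _)

theorem pcm2Rhs_comp : pcm2Rhs ρN ∘ₗ f = rTensor H (rTensor H f) ∘ₗ pcm2Rhs ρM :=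
  comp_comp_eq_of_comp_eq (comp_comp_eq_of_comp_eq (comp_comp_eq_of_comp_eq
    (comp_comp_eq_of_comp_eq hf.symm (rTensor_comp_eq_of_comp_eq H hf.symm))
    (rTensor_comp_eq_of_comp_eq H (rTensor_comp_eq_of_comp_eq H hf.symm)))
    (antLast_comp_rTensor _)) (mulLast_comp_rTensor _)

theorem pcm3Lhs_comp : pcm3Lhs ρN ∘ₗ f = rTensor H (rTensor H f) ∘ₗ pcm3Lhs ρM :=
  comp_comp_eq_of_comp_eq (comp_comp_eq_of_comp_eq (comp_comp_eq_of_comp_eq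
    (comp_comp_eq_of_comp_eq hf.symm (rTensor_comp_eq_of_comp_eq H hf.symm))
    (comulLast_comp_rTensor _))
    (rTensor_comp_eq_of_comp_eq H (antLast_comp_rTensor _)))
    (rTensor_comp_eq_of_comp_eq H (mulLast_comp_rTensor f))

theorem pcm3Rhs_comp : pcm3Rhs ρN ∘ₗ f = rTensor H (rTensor H f) ∘ₗ pcm3Rhs ρM :=
  comp_comp_eq_of_comp_eq (comp_comp_eq_of_comp_eq (comp_comp_eq_of_comp_eq
    (comp_comp_eq_of_comp_eq hf.symm (rTensor_comp_eq_of_comp_eq H hf.symm))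
    (rTensor_comp_eq_of_comp_eq H (rTensor_comp_eq_of_comp_eq H hf.symm)))
    (rTensor_comp_eq_of_comp_eq H (antLast_comp_rTensor _)))
    (rTensor_comp_eq_of_comp_eq H (mulLast_comp_rTensor f))

theorem IsPartialComodule.of_injective (hinj : Function.Injective f)
    (hN : IsPartialComodule k H ρN) : IsPartialComodule k H ρM := by
  have hinj₂ : Function.Injective (rTensor H (rTensor H f)) :=
    Module.Flat.rTensor_preserves_injective_linearMap _
      (Module.Flat.rTensor_preserves_injective_linearMap f hinj)
  refine ⟨(cancel_left hinj).1 ?_, (cancel_left hinj₂).1 ?_, (cancel_left hinj₂).1 ?_⟩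
  · rw [← counitLast_comp_coaction_comp hf, hN.counit, id_comp, comp_id]
  · change rTensor H (rTensor H f) ∘ₗ pcm2Lhs ρM = rTensor H (rTensor H f) ∘ₗ pcm2Rhs ρM
    rw [← pcm2Lhs_comp hf, ← pcm2Rhs_comp hf]
    exact congrArg (· ∘ₗ f) hN.pcm2
  · change rTensor H (rTensor H f) ∘ₗ pcm3Lhs ρM = rTensor H (rTensor H f) ∘ₗ pcm3Rhs ρM
    rw [← pcm3Lhs_comp hf, ← pcm3Rhs_comp hf]
    exact congrArg (· ∘ₗ f) hN.pcm3

theorem IsSubcomodule.comap {Q : Submodule k N} (hQ : IsSubcomodule k H ρN Q) :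
    IsSubcomodule k H ρM (Q.comap f) := by
  intro m hm
  have hexact := (Module.Flat.rTensor_exact H (Q.mkQ ∘ₗ f).exact_subtype_ker_map).linearMap_ker_eq
  rw [ker_comp, Submodule.ker_mkQ] at hexact
  rw [← hexact, mem_ker]
  obtain ⟨y, hy⟩ := hQ (f m) hm
  have hfm : rTensor H f (ρM m) = ρN (f m) := LinearMap.congr_fun hf m
  rw [rTensor_comp, LinearMap.comp_apply, hfm, ← hy,
    ← LinearMap.comp_apply (rTensor H Q.mkQ), ← rTensor_comp,
    (exact_subtype_mkQ Q).linearMap_comp_eq_zero, rTensor_zero, LinearMap.zero_apply]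

theorem IsSubcomodule.range : IsSubcomodule k H ρN (range f) := by
  rintro _ ⟨m, rfl⟩
  refine ⟨rTensor H f.rangeRestrict (ρM m), ?_⟩
  rw [← LinearMap.comp_apply, ← rTensor_comp, LinearMap.subtype_comp_codRestrict]
  exact LinearMap.congr_fun hf m

end Transfer

theorem isSubcomodule_bot : IsSubcomodule k H ρN ⊥ := by
  intro n hn
  rw [(Submodule.mem_bot k).1 hn, map_zero]
  exact zero_mem _

theorem IsSubcomodule.exists_isPartialComodule (hρ : IsPartialComodule k H ρM)
    {P : Submodule k M} (hP : IsSubcomodule k H ρM P) :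
    ∃ σ : P →ₗ[k] P ⊗[k] H,
      IsPartialComodule k H σ ∧ rTensor H P.subtype ∘ₗ σ = ρM ∘ₗ P.subtype := by
  obtain ⟨σ, hσ⟩ := exists_comp_eq_of_range_le
    (Module.Flat.rTensor_preserves_injective_linearMap (M := H) _ P.injective_subtype)
    (f := ρM ∘ₗ P.subtype) (by rintro _ ⟨p, rfl⟩; exact hP p p.2)
  exact ⟨σ, .of_injective hσ P.injective_subtype hρ, hσ⟩

namespace PComod

theorem mono_of_injective {A B : PComod k H} (φ : A ⟶ B) (hφ : Function.Injective φ.1) :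
    Mono φ :=
  ⟨fun _ _ e => Subtype.ext ((cancel_left hφ).1 (congrArg Subtype.val e))⟩

theorem injective_of_mono {A B : PComod k H} (φ : A ⟶ B) [Mono φ] : Function.Injective φ.1 := by
  have hK : IsSubcomodule k H A.ρ (ker φ.1) :=
    Submodule.comap_bot φ.1 ▸ isSubcomodule_bot.comap φ.2
  obtain ⟨σ, hσ, hincl⟩ := hK.exists_isPartialComodule A.isPartialComodule
  let K : PComod k H := ⟨ker φ.1, σ, hσ⟩
  let incl : K ⟶ A := ⟨(ker φ.1).subtype, hincl⟩
  let zero : K ⟶ A := ⟨0, by rw [rTensor_zero, LinearMap.zero_comp, LinearMap.comp_zero]⟩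
  have hincl_eq : incl = zero := (cancel_mono φ).1 <| Subtype.ext <| by
    ext x
    exact (mem_ker.1 x.2).trans (map_zero φ.1).symm
  refine (injective_iff_map_eq_zero φ.1).2 fun a ha => ?_
  exact LinearMap.congr_fun (congrArg Subtype.val hincl_eq) ⟨a, ha⟩

theorem exists_comp_eq_of_range_le {A B C : PComod k H} {i : A ⟶ B}
    (hi : Function.Injective i.1) (f : C ⟶ B) (h : range f.1 ≤ range i.1) :
    ∃ g : C ⟶ A, g ≫ i = f := by
  obtain ⟨g, hg⟩ := LinearMap.exists_comp_eq_of_range_le hi h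
  have hi₁ := Module.Flat.rTensor_preserves_injective_linearMap (M := H) i.1 hi
  refine ⟨⟨g, (cancel_left hi₁).1 ?_⟩, Subtype.ext hg⟩
  calc rTensor H i.1 ∘ₗ rTensor H g ∘ₗ C.ρ = rTensor H f.1 ∘ₗ C.ρ := by
        rw [← comp_assoc, ← rTensor_comp, hg]
    _ = B.ρ ∘ₗ f.1 := f.2
    _ = rTensor H i.1 ∘ₗ A.ρ ∘ₗ g := by rw [← hg, ← comp_assoc, ← i.2, comp_assoc]

section Colimits

variable {J : Type u} [SmallCategory J] (D : J ⥤ PComod k H)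

def colimitι (j : J) : (D.obj j).carrier →ₗ[k] ↑(colimit (D ⋙ pforget k H)) :=
  (colimit.ι (D ⋙ pforget k H) j).hom

theorem colimitι_comp_map {i j : J} (α : i ⟶ j) : colimitι D j ∘ₗ (D.map α).1 = colimitι D i :=
  congrArg ModuleCat.Hom.hom (colimit.w (D ⋙ pforget k H) α)

variable {D} in
theorem colimitι_linearMap_ext {W : Type u} [AddCommGroup W] [Module k W]
    {f g : ↑(colimit (D ⋙ pforget k H)) →ₗ[k] W}
    (h : ∀ j, f ∘ₗ colimitι D j = g ∘ₗ colimitι D j) : f = g :=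
  congrArg ModuleCat.Hom.hom
    (colimit.hom_ext (f := ModuleCat.ofHom f) (f' := ModuleCat.ofHom g) fun j =>
      ModuleCat.hom_ext (h j))

def coactionCocone : Cocone (D ⋙ pforget k H) where
  pt := ModuleCat.of k (↑(colimit (D ⋙ pforget k H)) ⊗[k] H)
  ι :=
    { app := fun j => ModuleCat.ofHom (rTensor H (colimitι D j) ∘ₗ (D.obj j).ρ)
      naturality := fun i j α => ModuleCat.hom_ext <| by
        change rTensor H (colimitι D j) ∘ₗ (D.obj j).ρ ∘ₗ (D.map α).1 =
          rTensor H (colimitι D i) ∘ₗ (D.obj i).ρ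
        rw [← (D.map α).2, ← comp_assoc, ← rTensor_comp, colimitι_comp_map] }

def colimitCoaction :
    ↑(colimit (D ⋙ pforget k H)) →ₗ[k] ↑(colimit (D ⋙ pforget k H)) ⊗[k] H :=
  (colimit.desc (D ⋙ pforget k H) (coactionCocone D)).hom

theorem colimitCoaction_comp_colimitι (j : J) :
    colimitCoaction D ∘ₗ colimitι D j = rTensor H (colimitι D j) ∘ₗ (D.obj j).ρ :=
  congrArg ModuleCat.Hom.hom (colimit.ι_desc (coactionCocone D) j)

theorem isPartialComodule_colimitCoaction : IsPartialComodule k H (colimitCoaction D) := by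
  have hι (j : J) := (colimitCoaction_comp_colimitι D j).symm
  refine ⟨colimitι_linearMap_ext fun j => ?_, colimitι_linearMap_ext fun j => ?_,
    colimitι_linearMap_ext fun j => ?_⟩
  · rw [counitLast_comp_coaction_comp (hι j), (D.obj j).isPartialComodule.counit, comp_id,
      id_comp]
  · change pcm2Lhs _ ∘ₗ _ = pcm2Rhs _ ∘ₗ _
    rw [pcm2Lhs_comp (hι j), pcm2Rhs_comp (hι j)]
    exact congrArg _ (D.obj j).isPartialComodule.pcm2
  · change pcm3Lhs _ ∘ₗ _ = pcm3Rhs _ ∘ₗ _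
    rw [pcm3Lhs_comp (hι j), pcm3Rhs_comp (hι j)]
    exact congrArg _ (D.obj j).isPartialComodule.pcm3

def colimitCocone : Cocone D where
  pt := ⟨↑(colimit (D ⋙ pforget k H)), colimitCoaction D, isPartialComodule_colimitCoaction D⟩
  ι :=
    { app := fun j => ⟨colimitι D j, (colimitCoaction_comp_colimitι D j).symm⟩
      naturality := fun _ _ α => Subtype.ext (colimitι_comp_map D α) }

variable {D} in
def colimitDesc (s : Cocone D) : ↑(colimit (D ⋙ pforget k H)) →ₗ[k] s.pt.carrier :=
  (colimit.desc _ ((pforget k H).mapCocone s)).hom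

theorem colimitDesc_comp_colimitι (s : Cocone D) (j : J) :
    colimitDesc s ∘ₗ colimitι D j = (s.ι.app j).1 :=
  congrArg ModuleCat.Hom.hom (colimit.ι_desc ((pforget k H).mapCocone s) j)

theorem rTensor_colimitDesc_comp (s : Cocone D) :
    rTensor H (colimitDesc s) ∘ₗ colimitCoaction D = s.pt.ρ ∘ₗ colimitDesc s :=
  colimitι_linearMap_ext fun j => by
    rw [comp_assoc, colimitCoaction_comp_colimitι, ← comp_assoc, ← rTensor_comp,
      colimitDesc_comp_colimitι, (s.ι.app j).2, comp_assoc, colimitDesc_comp_colimitι]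
    rfl

def isColimitColimitCocone : IsColimit (colimitCocone D) where
  desc s := ⟨colimitDesc s, rTensor_colimitDesc_comp D s⟩
  fac s j := Subtype.ext (colimitDesc_comp_colimitι D s j)
  uniq s _ hm := Subtype.ext <| colimitι_linearMap_ext fun j =>
    (congrArg Subtype.val (hm j)).trans (colimitDesc_comp_colimitι D s j).symm

instance : PreservesColimit D (pforget k H) :=
  preservesColimit_of_preserves_colimit_cocone (isColimitColimitCocone D)
    (colimit.isColimit (D ⋙ pforget k H))

variable [IsFiltered J] {D} {c : Cocone D} (hc : IsColimit c)
include hc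

theorem exists_forall_mem_range_ι (S : Finset c.pt.carrier) :
    ∃ j, ∀ x ∈ S, x ∈ range (c.ι.app j).1 := by
  classical
  induction S using Finset.induction_on with
  | empty => exact ⟨IsFiltered.nonempty.some, by simp⟩
  | insert a S _ ih =>
    obtain ⟨j, hj⟩ := ih
    obtain ⟨j', α, y, hy⟩ := Concrete.exists_hom_ι_eq_of_isColimit (D ⋙ pforget k H)
      (isColimitOfPreserves (pforget k H) hc) a j
    refine ⟨j', Finset.forall_mem_insert _ _ _ |>.2 ⟨⟨y, hy⟩, fun x hx => ?_⟩⟩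
    obtain ⟨z, rfl⟩ := hj x hx
    exact ⟨(D.map α).1 z, LinearMap.congr_fun (congrArg Subtype.val (c.w α)) z⟩

theorem injective_ι_of_mono (hmono : ∀ {i j : J} (α : i ⟶ j), Mono (D.map α)) (j : J) :
    Function.Injective (c.ι.app j).1 := by
  intro x x' hxx'
  obtain ⟨l, α, β, hl⟩ := Concrete.isColimit_exists_of_rep_eq (D ⋙ pforget k H)
    (isColimitOfPreserves (pforget k H) hc) x x' hxx'
  have map_comp_apply {a b e : J} (p : a ⟶ b) (q : b ⟶ e) (z : (D.obj a).carrier) :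
      (D.map (p ≫ q)).1 z = (D.map q).1 ((D.map p).1 z) := by
    rw [D.map_comp]; rfl
  have := hmono (α ≫ IsFiltered.coeqHom α β)
  apply injective_of_mono (D.map (α ≫ IsFiltered.coeqHom α β))
  rw [map_comp_apply, IsFiltered.coeq_condition α β, map_comp_apply]
  exact congrArg _ hl

end Colimits

end PComod

end PartialComodules

/-- If `M` is a partial `H`-comodule admitting a finite subset `F` such that
the only partial subcomodule of `M` containing `F` is `M` itself, then `M` is a finitely
generated object of the Grothendieck category `PMod^H`: for every filtered colimit
`N = colim Nᵢ` of monomorphisms, the canonical map `colim Hom(M, Nᵢ) → Hom(M, N)` is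
bijective (expressed elementwise: every morphism to the colimit factors through some stage,
and two morphisms that agree in the colimit are already identified at some stage). -/
theorem pcomod_finitelyGenerated
    (k : Type u) [Field k] (H : Type u) [Ring H] [HopfAlgebra k H]
    (M : PComod k H) (F : Finset M.carrier)
    (hF : ∀ N : Submodule k M.carrier, IsSubcomodule k H M.ρ N →
      (↑F : Set M.carrier) ⊆ ↑N → N = ⊤)
    (J : Type u) [SmallCategory J] [IsFiltered J]
    (D : J ⥤ PComod k H) (hmono : ∀ {i j : J} (α : i ⟶ j), Mono (D.map α))
    (c : Cocone D) (hc : IsColimit c) :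
    (∀ f : M ⟶ c.pt, ∃ (j : J) (g : M ⟶ D.obj j), g ≫ c.ι.app j = f) ∧
    (∀ (i i' : J) (g : M ⟶ D.obj i) (g' : M ⟶ D.obj i'),
      g ≫ c.ι.app i = g' ≫ c.ι.app i' →
      ∃ (j : J) (α : i ⟶ j) (β : i' ⟶ j), g ≫ D.map α = g' ≫ D.map β) := by
  refine ⟨fun f => ?_, fun i i' g g' h => ?_⟩
  · classical
    obtain ⟨j, hj⟩ := PComod.exists_forall_mem_range_ι hc (F.image f.1)
    have hrange : range f.1 ≤ range (c.ι.app j).1 := by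
      have hpreimage_top := hF _ ((IsSubcomodule.range (c.ι.app j).2).comap f.2)
        fun m hm => hj (f.1 m) (Finset.mem_image_of_mem _ hm)
      rintro _ ⟨m, rfl⟩
      exact (Submodule.eq_top_iff'.1 hpreimage_top) m
    exact ⟨j, PComod.exists_comp_eq_of_range_le (PComod.injective_ι_of_mono hc hmono j) f hrange⟩
  · have := PComod.mono_of_injective _
      (PComod.injective_ι_of_mono hc hmono (IsFiltered.max i i'))
    refine ⟨_, IsFiltered.leftToMax i i', IsFiltered.rightToMax i i', (cancel_mono
      (c.ι.app (IsFiltered.max i i'))).1 ?_⟩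
    simpa only [Category.assoc, c.w] using h

end
end

section
/- Let k be an algebraically closed field of characteristic 0 and G a finite abelian group. Then the group Hopf algebra kG is regular: every partial kG-comodule is the sum of its finite-dimensional partial subcomodules. -/
open TensorProduct CategoryTheory CategoryTheory.Limits

noncomputable section

universe u

section Regular

variable (k : Type u) [Field k] (H : Type u) [Ring H] [HopfAlgebra k H]

/-- A partial comodule is regular when it is the sum of its finite-dimensional partial
subcomodules. -/
def IsRegularComodule {M : Type u} [AddCommGroup M] [Module k M]
    (ρ : M →ₗ[k] M ⊗[k] H) : Prop :=
  sSup { N : Submodule k M | IsSubcomodule k H ρ N ∧ FiniteDimensional k ↥N } = ⊤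

/-- A Hopf algebra is regular when every partial comodule over it is regular. -/
def IsRegularHopf : Prop :=
  ∀ (M : Type u) (_ : AddCommGroup M) (_ : Module k M) (ρ : M →ₗ[k] M ⊗[k] H),
    IsPartialComodule k H ρ → IsRegularComodule k H ρ

end Regular

section GroupAlgebra

variable (k : Type u) [Field k] (K : Type u) [Ring K] [HopfAlgebra k K]
variable (G : Type u) [Group G]

/-- `e : G → K` exhibits the Hopf algebra `K` as the group Hopf algebra `kG` of the group
`G`: the elements `e g` form a basis of `K`, multiply as in `G`, are grouplike, and the
antipode is induced by inversion in `G`. -/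
structure IsGroupHopfAlgebra (e : G → K) : Prop where
  basis : ∃ b : Module.Basis G k K, ∀ g : G, b g = e g
  map_mul : ∀ g h : G, e g * e h = e (g * h)
  map_one : e 1 = 1
  comul_grouplike : ∀ g : G, Coalgebra.comul (R := k) (e g) = e g ⊗ₜ[k] e g
  counit_grouplike : ∀ g : G, Coalgebra.counit (R := k) (e g) = 1
  antipode_inv : ∀ g : G, HopfAlgebra.antipode (R := k) (e g) = e g⁻¹

end GroupAlgebra

/-!
Write the coaction as `ρ m = ∑ g, T g m ⊗ g` and, for a character `φ : G →* kˣ`, put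
`π φ = ∑ g, φ g • T g`, i.e. `ρ` followed by evaluation of the `kG`-factor at `φ`. Characters are
algebra maps `kG → k` whose convolution products and composites with the antipode are again
characters, so evaluating (PCM1)–(PCM3) at pairs of characters says exactly that `π` is a partial
representation (in the sense of Exel) of the dual group `G →* kˣ`. For a partial representation of
a finite group the idempotents `π φ * π φ⁻¹` commute and are permuted by conjugation with the
`π ψ`, so every product of `π`'s has the form `e * π ψ` with `e` a product of these idempotents:
the algebra generated by `π` is finite-dimensional. Since `k` has enough roots of unity, the
characters span `G → k`, so every `T g` lies in that algebra, and applying it to `m` gives a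
finite-dimensional partial subcomodule containing `m`.
-/

theorem Submonoid.finite_closure_range_of_isIdempotentElem {M ι : Type*} [Monoid M] [Finite ι]
    (f : ι → M) (hcomm : ∀ i j, Commute (f i) (f j)) (hidem : ∀ i, IsIdempotentElem (f i)) :
    (Submonoid.closure (Set.range f) : Set M).Finite := by
  classical
  have pairwise : Pairwise (Function.onFun Commute f) := fun i j _ => hcomm i j
  let prod (s : Finset ι) : M := s.noncommProd f (pairwise.set_pairwise _)
  have mul_prod (i : ι) (s : Finset ι) : f i * prod s = prod (insert i s) := by
    by_cases hi : i ∈ s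
    · simp only [prod, Finset.insert_eq_of_mem hi]
      rw [← Finset.mul_noncommProd_erase s hi, ← mul_assoc, (hidem i).eq]
    · exact (Finset.noncommProd_insert_of_notMem _ _ _ _ hi).symm
  refine (Set.finite_range prod).subset fun x hx => ?_
  induction hx using Submonoid.closure_induction_left with
  | one => exact ⟨∅, Finset.noncommProd_empty _ _⟩
  | mul_left x hx y _ hy =>
    obtain ⟨i, rfl⟩ := hx
    obtain ⟨s, rfl⟩ := hy
    exact ⟨insert i s, (mul_prod i s).symm⟩

structure IsPartialRepresentation {Γ R : Type*} [Group Γ] [Monoid R] (π : Γ → R) : Prop where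
  map_one : π 1 = 1
  inv_mul_mul : ∀ g h, π g⁻¹ * π g * π h = π g⁻¹ * π (g * h)
  mul_mul_inv : ∀ g h, π g * π h * π h⁻¹ = π (g * h) * π h⁻¹

namespace IsPartialRepresentation

section Monoid

variable {Γ R : Type*} [Group Γ] [Monoid R] {π : Γ → R}

theorem mul_eq_mul_inv_mul (hπ : IsPartialRepresentation π) (g h : Γ) :
    π g * π h = π g * π g⁻¹ * π (g * h) := by
  simpa using (hπ.inv_mul_mul g⁻¹ (g * h)).symm

theorem mul_inv_mul_self (hπ : IsPartialRepresentation π) (g : Γ) :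
    π g * π g⁻¹ * π g = π g := by
  simpa [hπ.map_one] using hπ.mul_mul_inv g g⁻¹

theorem isIdempotentElem_mul_inv (hπ : IsPartialRepresentation π) (g : Γ) :
    IsIdempotentElem (π g * π g⁻¹) := by
  rw [IsIdempotentElem, ← mul_assoc, hπ.mul_inv_mul_self]

theorem mul_mul_mul_inv (hπ : IsPartialRepresentation π) (g h : Γ) :
    π g * (π h * π h⁻¹) = π (g * h) * π (g * h)⁻¹ * π g := by
  rw [← mul_assoc, hπ.mul_mul_inv, hπ.mul_eq_mul_inv_mul, mul_inv_cancel_right]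

theorem commute_mul_inv (hπ : IsPartialRepresentation π) (g h : Γ) :
    Commute (π g * π g⁻¹) (π h * π h⁻¹) := by
  have left := hπ.mul_mul_mul_inv g⁻¹ h
  have right := hπ.mul_mul_mul_inv g (g⁻¹ * h)
  rw [mul_inv_cancel_left] at right
  calc π g * π g⁻¹ * (π h * π h⁻¹) = π g * (π g⁻¹ * (π h * π h⁻¹)) := by rw [mul_assoc]
    _ = π g * (π (g⁻¹ * h) * π (g⁻¹ * h)⁻¹) * π g⁻¹ := by rw [left, ← mul_assoc, ← mul_assoc]
    _ = π h * π h⁻¹ * (π g * π g⁻¹) := by rw [right, mul_assoc]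

end Monoid

theorem finite_adjoin {k Γ R : Type*} [CommRing k] [Group Γ] [Finite Γ] [Ring R] [Algebra k R]
    {π : Γ → R} (hπ : IsPartialRepresentation π) :
    Module.Finite k (Algebra.adjoin k (Set.range π)) := by
  set C := Submonoid.closure (Set.range fun g => π g * π g⁻¹)
  have hC : (C : Set R).Finite := Submonoid.finite_closure_range_of_isIdempotentElem _
    hπ.commute_mul_inv hπ.isIdempotentElem_mul_inv
  have conj (g : Γ) (c : R) (hc : c ∈ C) : ∃ c' ∈ C, π g * c = c' * π g := by
    induction hc using Submonoid.closure_induction with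
    | mem c hc =>
      obtain ⟨h, rfl⟩ := hc
      exact ⟨_, Submonoid.subset_closure ⟨g * h, rfl⟩, hπ.mul_mul_mul_inv g h⟩
    | one => exact ⟨1, C.one_mem, by rw [one_mul, mul_one]⟩
    | mul c d _ _ hc hd =>
      obtain ⟨c', hc', hc⟩ := hc
      obtain ⟨d', hd', hd⟩ := hd
      exact ⟨c' * d', C.mul_mem hc' hd', by rw [← mul_assoc, hc, mul_assoc, hd, mul_assoc]⟩
  have closure_subset : (Submonoid.closure (Set.range π) : Set R) ⊆
      Set.image2 (· * ·) (C : Set R) (Set.range π) := by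
    intro x hx
    induction hx using Submonoid.closure_induction_left with
    | one => exact ⟨1, C.one_mem, π 1, ⟨1, rfl⟩, by simp [hπ.map_one]⟩
    | mul_left x hx y _ hy =>
      obtain ⟨g, rfl⟩ := hx
      obtain ⟨c, hc, _, ⟨h, rfl⟩, rfl⟩ := hy
      obtain ⟨c', hc', hconj⟩ := conj g c hc
      refine ⟨c' * (π g * π g⁻¹), C.mul_mem hc' (Submonoid.subset_closure ⟨g, rfl⟩),
        π (g * h), ⟨g * h, rfl⟩, ?_⟩
      dsimp only
      rw [mul_assoc, ← hπ.mul_eq_mul_inv_mul, ← mul_assoc, ← hconj, mul_assoc]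
  show Module.Finite k (Subalgebra.toSubmodule (Algebra.adjoin k (Set.range π)))
  rw [Module.Finite.iff_fg, Algebra.adjoin_eq_span]
  exact Submodule.fg_span ((hC.image2 _ (Set.finite_range π)).subset closure_subset)

end IsPartialRepresentation

theorem span_range_monoidHom_units_eq_top (k G : Type*) [Field k] [CommGroup G] [Finite G]
    [HasEnoughRootsOfUnity k (Monoid.exponent G)] :
    Submodule.span k (Set.range fun (φ : G →* kˣ) (g : G) => (φ g : k)) = ⊤ := by
  have : Fintype (G →* kˣ) := Fintype.ofFinite _
  have : Fintype G := Fintype.ofFinite G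
  refine LinearIndependent.span_eq_top_of_card_eq_finrank' ?_ ?_
  · exact (linearIndependent_monoidHom G k).comp (fun φ => (Units.coeHom k).comp φ)
      fun φ ψ h => MonoidHom.ext fun g => Units.ext (DFunLike.congr_fun h g)
  · rw [Module.finrank_fintype_fun_eq_card, Fintype.card_eq_nat_card, Fintype.card_eq_nat_card,
      CommGroup.card_monoidHom_of_hasEnoughRootsOfUnity]

theorem mem_span_range_linearCombination_comp {k ι κ V : Type*} [CommRing k] [AddCommGroup V]
    [Module k V] [Fintype ι] {χ : κ → ι → k} (hχ : Submodule.span k (Set.range χ) = ⊤)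
    (v : ι → V) (i : ι) :
    v i ∈ Submodule.span k (Set.range (Fintype.linearCombination k v ∘ χ)) := by
  rw [Set.range_comp, ← Submodule.map_span, hχ, Submodule.map_top,
    Fintype.range_linearCombination]
  exact Submodule.subset_span ⟨i, rfl⟩

section CoactionCoeff

variable {k H M : Type u} [Field k] [Ring H] [HopfAlgebra k H] [AddCommGroup M] [Module k M]
  {ι : Type*} [Fintype ι] [DecidableEq ι] (b : Module.Basis ι k H) (ρ : M →ₗ[k] M ⊗[k] H)

def coactionCoeff (i : ι) : Module.End k M :=
  Finsupp.lapply i ∘ₗ (TensorProduct.equivFinsuppOfBasisRight b).toLinearMap ∘ₗ ρ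

theorem sum_coactionCoeff_tmul (m : M) : ∑ i, coactionCoeff b ρ i m ⊗ₜ[k] b i = ρ m := by
  conv_rhs => rw [← (TensorProduct.equivFinsuppOfBasisRight b).symm_apply_apply (ρ m),
    TensorProduct.equivFinsuppOfBasisRight_symm_apply, Finsupp.sum_fintype _ _ (by simp)]
  rfl

theorem isSubcomodule_of_forall_coactionCoeff_mem {N : Submodule k M}
    (hN : ∀ i, ∀ n ∈ N, coactionCoeff b ρ i n ∈ N) : IsSubcomodule k H ρ N := by
  intro n hn
  refine ⟨∑ i, ⟨coactionCoeff b ρ i n, hN i n hn⟩ ⊗ₜ[k] b i, ?_⟩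
  simp [sum_coactionCoeff_tmul]

theorem isRegularComodule_of_finite_adjoin
    (h : Module.Finite k (Algebra.adjoin k (Set.range (coactionCoeff b ρ)))) :
    IsRegularComodule k H ρ := by
  rw [IsRegularComodule, eq_top_iff]
  intro m _
  set A := Algebra.adjoin k (Set.range (coactionCoeff b ρ))
  have : Module.Finite k (Subalgebra.toSubmodule A) := h
  have hN : IsSubcomodule k H ρ ((Subalgebra.toSubmodule A).map (LinearMap.applyₗ m)) := by
    refine isSubcomodule_of_forall_coactionCoeff_mem b ρ ?_
    rintro i _ ⟨f, hf, rfl⟩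
    exact ⟨coactionCoeff b ρ i * f, A.mul_mem (Algebra.subset_adjoin ⟨i, rfl⟩) hf, rfl⟩
  exact le_sSup (a := (Subalgebra.toSubmodule A).map (LinearMap.applyₗ m))
    (Set.mem_ofPred.mpr ⟨hN, inferInstance⟩) ⟨1, A.one_mem, rfl⟩

end CoactionCoeff

section GroupHopfAlgebra

variable {k K G : Type u} [Field k] [Ring K] [HopfAlgebra k K] [Group G] (b : Module.Basis G k K)

def contractChar (φ : G →* kˣ) (X : Type u) [AddCommGroup X] [Module k X] :
    X ⊗[k] K →ₗ[k] X :=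
  (TensorProduct.rid k X).toLinearMap ∘ₗ LinearMap.lTensor X (b.constr k fun g => (φ g : k))

theorem contractChar_tmul_basis (φ : G →* kˣ) {X : Type u} [AddCommGroup X] [Module k X]
    (x : X) (g : G) : contractChar b φ X (x ⊗ₜ[k] b g) = (φ g : k) • x := by
  simp [contractChar]

theorem mulLast_tmul {X : Type u} [AddCommGroup X] [Module k X] (x : X) (y z : K) :
    mulLast k K X ((x ⊗ₜ[k] y) ⊗ₜ[k] z) = x ⊗ₜ[k] (y * z) := by
  simp [mulLast]

theorem antLast_tmul_basis (hK : IsGroupHopfAlgebra k K G b) {X : Type u} [AddCommGroup X]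
    [Module k X] (x : X) (g : G) : antLast k K X (x ⊗ₜ[k] b g) = x ⊗ₜ[k] b g⁻¹ := by
  simp [antLast, hK.antipode_inv]

theorem comulLast_tmul_basis (hK : IsGroupHopfAlgebra k K G b) {X : Type u} [AddCommGroup X]
    [Module k X] (x : X) (g : G) :
    comulLast k K X (x ⊗ₜ[k] b g) = (x ⊗ₜ[k] b g) ⊗ₜ[k] b g := by
  simp [comulLast, hK.comul_grouplike]

variable [Fintype G] [DecidableEq G] {M : Type u} [AddCommGroup M] [Module k M]
  (ρ : M →ₗ[k] M ⊗[k] K)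

def characterOp (φ : G →* kˣ) : Module.End k M :=
  Fintype.linearCombination k (coactionCoeff b ρ) fun g => (φ g : k)

theorem characterOp_one (hK : IsGroupHopfAlgebra k K G b) (hρ : IsPartialComodule k K ρ) :
    characterOp b ρ 1 = 1 := by
  ext m
  have h := LinearMap.congr_fun hρ.counit m
  simp only [LinearMap.comp_apply, ← sum_coactionCoeff_tmul b ρ, map_sum, counitLast,
    LinearEquiv.coe_coe, LinearMap.lTensor_tmul, hK.counit_grouplike, TensorProduct.rid_tmul,
    one_smul] at h
  simpa [characterOp, Fintype.linearCombination_apply] using h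

theorem characterOp_mul_mul_inv (hK : IsGroupHopfAlgebra k K G b) (hρ : IsPartialComodule k K ρ)
    (φ ψ : G →* kˣ) :
    characterOp b ρ φ * characterOp b ρ ψ * characterOp b ρ ψ⁻¹ =
      characterOp b ρ (φ * ψ) * characterOp b ρ ψ⁻¹ := by
  ext m
  have h := congr(contractChar b φ M
    (contractChar b ψ (M ⊗[k] K) $(LinearMap.congr_fun hρ.pcm2 m)))
  simp only [LinearMap.comp_apply, ← sum_coactionCoeff_tmul b ρ, map_sum, LinearMap.rTensor_tmul,
    TensorProduct.sum_tmul, comulLast_tmul_basis b hK, antLast_tmul_basis b hK, mulLast_tmul,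
    hK.map_mul, map_smul, contractChar_tmul_basis] at h
  simp only [Module.End.mul_apply, characterOp, Fintype.linearCombination_apply,
    LinearMap.sum_apply, LinearMap.smul_apply, map_sum, map_smul]
  simp only [Finset.smul_sum, smul_smul, map_mul, map_inv, MonoidHom.mul_apply,
    MonoidHom.inv_apply, Units.val_mul, Units.val_inv_eq_inv_val] at h ⊢
  simp only [mul_comm, mul_assoc] at h ⊢
  exact h.symm

theorem characterOp_inv_mul_mul (hK : IsGroupHopfAlgebra k K G b) (hρ : IsPartialComodule k K ρ)
    (φ ψ : G →* kˣ) :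
    characterOp b ρ φ⁻¹ * characterOp b ρ φ * characterOp b ρ ψ =
      characterOp b ρ φ⁻¹ * characterOp b ρ (φ * ψ) := by
  ext m
  have h := congr(contractChar b φ⁻¹ M
    (contractChar b ψ (M ⊗[k] K) $(LinearMap.congr_fun hρ.pcm3 m)))
  simp only [LinearMap.comp_apply, ← sum_coactionCoeff_tmul b ρ, map_sum, LinearMap.rTensor_tmul,
    TensorProduct.sum_tmul, comulLast_tmul_basis b hK, antLast_tmul_basis b hK, mulLast_tmul,
    hK.map_mul, map_smul, contractChar_tmul_basis] at h
  simp only [Module.End.mul_apply, characterOp, Fintype.linearCombination_apply,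
    LinearMap.sum_apply, LinearMap.smul_apply, map_sum, map_smul]
  simp only [Finset.smul_sum, smul_smul, map_mul, map_inv, MonoidHom.mul_apply,
    MonoidHom.inv_apply, Units.val_mul, Units.val_inv_eq_inv_val] at h ⊢
  simp only [inv_inv, mul_comm, mul_left_comm, mul_assoc] at h ⊢
  exact h.symm

theorem isPartialRepresentation_characterOp (hK : IsGroupHopfAlgebra k K G b)
    (hρ : IsPartialComodule k K ρ) : IsPartialRepresentation (characterOp b ρ) where
  map_one := characterOp_one b ρ hK hρ
  inv_mul_mul := characterOp_inv_mul_mul b ρ hK hρ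
  mul_mul_inv := characterOp_mul_mul_inv b ρ hK hρ

end GroupHopfAlgebra

/-- Over an algebraically closed field of characteristic zero, the group
Hopf algebra `kG` of a finite abelian group `G` is regular: every partial `kG`-comodule is
the sum of its finite-dimensional partial subcomodules. -/
theorem groupAlgebra_regular_of_finite_abelian
    (k : Type u) [Field k] [IsAlgClosed k] [CharZero k]
    (G : Type u) [CommGroup G] [Finite G]
    (K : Type u) [Ring K] [HopfAlgebra k K]
    (e : G → K) (hK : IsGroupHopfAlgebra k K G e) :
    IsRegularHopf k K := by
  classical
  have : Fintype G := Fintype.ofFinite G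
  have : NeZero (Monoid.exponent G : k) :=
    ⟨Nat.cast_ne_zero.mpr Monoid.exponent_ne_zero_of_finite⟩
  obtain ⟨b, hb⟩ := hK.basis
  obtain rfl : ⇑b = e := funext hb
  intro M _ _ ρ hρ
  refine isRegularComodule_of_finite_adjoin b ρ ?_
  have := (isPartialRepresentation_characterOp b ρ hK hρ).finite_adjoin (k := k)
  have hle : Algebra.adjoin k (Set.range (coactionCoeff b ρ)) ≤
      Algebra.adjoin k (Set.range (characterOp b ρ)) := by
    refine Algebra.adjoin_le fun _ ⟨g, hg⟩ => hg ▸ Algebra.span_le_adjoin k _ ?_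
    exact mem_span_range_linearCombination_comp (span_range_monoidHom_units_eq_top k G) _ g
  exact Subalgebra.finiteDimensional_toSubmodule.mp
    (Submodule.finiteDimensional_of_le (Subalgebra.toSubmodule.monotone hle))


end
end
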